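/- For a > 0 define v_a : ℝ → ℝ by v_a(x) = 2·arctan(x/a). Let n ≥ 1, let K ≥ 1 and L ≥ 1 be natural numbers, and let a_1,…,a_K > 0 and b_1,…,b_L > 0. Then there exists a unique ξ = (ξ_1,…,ξ_n) ∈ ℝ^n satisfying, for every j ∈ {1,…,n}, the system Σ_{k=1}^K v_{a_k}(ξ_j) + Σ_{j′≠j} Σ_{l=1}^L v_{b_l}(ξ_j − ξ_{j′}) = π(n+1−2j). Moreover this solution satisfies ξ_j − ξ_{j′} ≥ 2π(j′−j)/κ₋ for all 1 ≤ j < j′ ≤ n, where κ₋ = 2 Σ_{k=1}^K a_k^{−1} + 2n Σ_{l=1}^L b_l^{−1}. -/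

import Mathlib

/-!
The system is the critical-point equation of the potential
`V ξ = ∑ i, ∑ k, W_{a k} (ξ i) + ½ ∑ i, ∑ m, ∑ l, W_{b l} (ξ i - ξ m) - π ∑ i, (n - 1 - 2 i) ξ i`,
where `W_a` is the even antiderivative of `v_a`. As `W_a x ≥ (π - ε) |x| - O(1/ε)`, the pair terms
dominate the linear term and `V` is coercive, so its global minimum solves the system.
Uniqueness is a maximum principle: the `j`-th left-hand side is strictly increasing in `ξ j` and
nondecreasing in each `ξ j - ξ m`. Subtracting equations `j < j'` leaves `2π (j' - j) > 0`, which
forces `ξ j > ξ j'`, and then bounds `κ₋ (ξ j - ξ j')` from below because `v_a` is `2/a`-Lipschitz.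
-/

open Real Finset

/-- The rational function `v_a(x) = 2 arctan(x/a)`. -/
noncomputable def vRat (a x : ℝ) : ℝ := 2 * Real.arctan (x / a)

/-- The rational type A Bethe critical-point system at `α = 0`, `β = β_n`, `μ = ρ̃`. -/
def ratASys (n K L : ℕ) (a : Fin K → ℝ) (b : Fin L → ℝ) (ξ : Fin n → ℝ) : Prop :=
  ∀ j : Fin n,
    (∑ k, vRat (a k) (ξ j)) +
    (∑ j' ∈ Finset.univ.erase j, ∑ l, vRat (b l) (ξ j - ξ j'))
    = π * ((n : ℝ) - 1 - 2 * j.val)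

open Function Filter

theorem Real.arctan_sub_le_sub {x y : ℝ} (hxy : x ≤ y) : arctan y - arctan x ≤ y - x := by
  have := image_sub_le_mul_sub_of_deriv_le differentiable_arctan (C := 1)
    (fun z => by
      rw [deriv_arctan]
      exact div_le_one_of_le₀ (by nlinarith [sq_nonneg z]) (by positivity)) hxy
  linarith

section vRat

variable {a x y : ℝ}

theorem vRat_neg (a x : ℝ) : vRat a (-x) = -vRat a x := by
  simp [vRat, neg_div]

theorem vRat_strictMono (ha : 0 < a) : StrictMono (vRat a) := fun _ _ hxy =>
  mul_lt_mul_of_pos_left (arctan_strictMono (div_lt_div_of_pos_right hxy ha)) two_pos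

theorem vRat_sub_le (ha : 0 < a) (hxy : x ≤ y) : vRat a y - vRat a x ≤ 2 / a * (y - x) := by
  have := arctan_sub_le_sub (div_le_div_of_nonneg_right hxy ha.le)
  calc vRat a y - vRat a x = 2 * (arctan (y / a) - arctan (x / a)) := by simp only [vRat]; ring
    _ ≤ 2 * (y / a - x / a) := by gcongr
    _ = 2 / a * (y - x) := by ring

theorem pi_sub_le_vRat (ha : 0 < a) (hx : 0 < x) : π - 2 * a / x ≤ vRat a x := by
  have h := arctan_inv_of_pos (div_pos hx ha)
  have hle : arctan (x / a)⁻¹ ≤ (x / a)⁻¹ := by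
    simpa using arctan_sub_le_sub (inv_nonneg.2 (div_pos hx ha).le)
  rw [inv_div] at h hle
  unfold vRat
  linarith [show 2 * a / x = 2 * (a / x) by ring]

end vRat

/-- The antiderivative of `vRat a` vanishing at `0`. -/
noncomputable def wRat (a x : ℝ) : ℝ := 2 * x * arctan (x / a) - a * log (1 + (x / a) ^ 2)

section wRat

variable {a x : ℝ}

theorem wRat_zero (a : ℝ) : wRat a 0 = 0 := by simp [wRat]

theorem wRat_neg (a x : ℝ) : wRat a (-x) = wRat a x := by
  simp only [wRat, neg_div, arctan_neg, neg_sq]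
  ring

theorem wRat_abs (a x : ℝ) : wRat a |x| = wRat a x := by
  rcases abs_choice x with h | h <;> rw [h]
  exact wRat_neg a x

@[fun_prop]
theorem continuous_wRat (a : ℝ) : Continuous (wRat a) := by
  unfold wRat
  fun_prop (disch := intro x; positivity)

theorem hasDerivAt_wRat (ha : a ≠ 0) (x : ℝ) : HasDerivAt (wRat a) (vRat a x) x := by
  have hq : HasDerivAt (fun x => x / a) (1 / a) x := (hasDerivAt_id x).div_const a
  have hpos : 0 < 1 + (x / a) ^ 2 := by positivity
  have h := (((hasDerivAt_id x).const_mul 2).mul ((hasDerivAt_arctan _).comp x hq)).sub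
    ((((hq.pow 2).const_add 1).log hpos.ne').const_mul a)
  refine h.congr_deriv ?_
  simp only [vRat, comp_apply, id, Pi.pow_apply]
  norm_num
  field_simp
  ring

theorem wRat_nonneg (ha : 0 < a) (x : ℝ) : 0 ≤ wRat a x := by
  have hmono : MonotoneOn (wRat a) (Set.Ici 0) :=
    monotoneOn_of_deriv_nonneg (convex_Ici 0) (continuous_wRat a).continuousOn
      (fun z _ => (hasDerivAt_wRat ha.ne' z).differentiableAt.differentiableWithinAt)
      fun z hz => by
        rw [interior_Ici, Set.mem_Ioi] at hz
        rw [(hasDerivAt_wRat ha.ne' z).deriv]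
        simpa [vRat] using (vRat_strictMono ha hz).le
  rw [← wRat_abs, ← wRat_zero a]
  exact hmono Set.self_mem_Ici (abs_nonneg x) (abs_nonneg x)

/-- Since `vRat a z ≥ π - ε` for `z ≥ 2a/ε`, `wRat a` grows at least with slope `π - ε`. -/
theorem le_wRat (ha : 0 < a) {ε : ℝ} (hε : 0 < ε) (x : ℝ) :
    (π - ε) * |x| - 2 * π * a / ε ≤ wRat a x := by
  set x₀ := 2 * a / ε
  have hx₀ : 0 < x₀ := by positivity
  have hπx₀ : π * x₀ = 2 * π * a / ε := by ring
  rw [← wRat_abs]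
  rcases le_or_gt |x| x₀ with hx | hx
  · nlinarith [wRat_nonneg ha |x|, abs_nonneg x, pi_pos]
  · have hslope := (convex_Ici x₀).mul_sub_le_image_sub_of_le_deriv (C := π - ε)
      (continuous_wRat a).continuousOn
      (fun z _ => (hasDerivAt_wRat ha.ne' z).differentiableAt.differentiableWithinAt)
      (fun z hz => by
        rw [interior_Ici, Set.mem_Ioi] at hz
        rw [(hasDerivAt_wRat ha.ne' z).deriv]
        have hz0 : 0 < z := hx₀.trans hz
        have : 2 * a / z ≤ ε := by
          rw [div_le_iff₀ hz0]
          have := (div_lt_iff₀' hε).1 hz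
          linarith
        linarith [pi_sub_le_vRat ha hz0])
      x₀ Set.self_mem_Ici |x| hx.le hx.le
    nlinarith [wRat_nonneg ha x₀]

theorem le_sum_wRat {α : Type*} [Fintype α] {a : α → ℝ} (ha : ∀ k, 0 < a k) (k₀ : α)
    {ε : ℝ} (hε : 0 < ε) (x : ℝ) : (π - ε) * |x| - 2 * π * a k₀ / ε ≤ ∑ k, wRat (a k) x :=
  (le_wRat (ha k₀) hε x).trans
    (single_le_sum (fun k _ => wRat_nonneg (ha k) x) (mem_univ k₀))

end wRat

/-- The left-hand side of the `j`-th equation; the pair sum includes the vanishing term `m = j`. -/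
noncomputable def ratAPhase {ι α β : Type*} [Fintype ι] [Fintype α] [Fintype β]
    (a : α → ℝ) (b : β → ℝ) (ξ : ι → ℝ) (j : ι) : ℝ :=
  ∑ k, vRat (a k) (ξ j) + ∑ m, ∑ l, vRat (b l) (ξ j - ξ m)

theorem ratASys_iff {n K L : ℕ} {a : Fin K → ℝ} {b : Fin L → ℝ} {ξ : Fin n → ℝ} :
    ratASys n K L a b ξ ↔ ∀ j, ratAPhase a b ξ j = π * ((n : ℝ) - 1 - 2 * j.val) := by
  refine forall_congr' fun j => ?_
  rw [ratAPhase, sum_erase _ (by simp [vRat])]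

section Phase

variable {ι α β : Type*} [Fintype ι] [Fintype α] [Fintype β] {a : α → ℝ} {b : β → ℝ}
  {ξ η : ι → ℝ} {j j' : ι}

theorem ratAPhase_le_ratAPhase (ha : ∀ k, 0 < a k) (hb : ∀ l, 0 < b l) (hj : ξ j ≤ η j')
    (hm : ∀ m, ξ j - ξ m ≤ η j' - η m) : ratAPhase a b ξ j ≤ ratAPhase a b η j' :=
  add_le_add (sum_le_sum fun k _ => (vRat_strictMono (ha k)).monotone hj)
    (sum_le_sum fun m _ => sum_le_sum fun l _ => (vRat_strictMono (hb l)).monotone (hm m))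

theorem ratAPhase_lt_ratAPhase [Nonempty α] (ha : ∀ k, 0 < a k) (hb : ∀ l, 0 < b l)
    (hj : ξ j < η j') (hm : ∀ m, ξ j - ξ m ≤ η j' - η m) :
    ratAPhase a b ξ j < ratAPhase a b η j' :=
  add_lt_add_of_lt_of_le (sum_lt_sum_of_nonempty univ_nonempty fun k _ => vRat_strictMono (ha k) hj)
    (sum_le_sum fun m _ => sum_le_sum fun l _ => (vRat_strictMono (hb l)).monotone (hm m))

theorem le_of_ratAPhase_eq [Nonempty α] (ha : ∀ k, 0 < a k) (hb : ∀ l, 0 < b l)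
    (h : ratAPhase a b ξ = ratAPhase a b η) : ξ ≤ η := by
  intro i
  obtain ⟨j, -, hj⟩ := exists_max_image univ (fun i => ξ i - η i) ⟨i, mem_univ i⟩
  have hjj : ξ j ≤ η j := by
    by_contra! hlt
    refine (ratAPhase_lt_ratAPhase ha hb hlt fun m => ?_).ne (congrFun h j).symm
    linarith [hj m (mem_univ m)]
  linarith [hj i (mem_univ i)]

theorem ratAPhase_injective [Nonempty α] (ha : ∀ k, 0 < a k) (hb : ∀ l, 0 < b l) :
    Injective (ratAPhase a b : (ι → ℝ) → ι → ℝ) := fun _ _ h =>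
  le_antisymm (le_of_ratAPhase_eq ha hb h) (le_of_ratAPhase_eq ha hb h.symm)

theorem ratAPhase_sub_le (ha : ∀ k, 0 < a k) (hb : ∀ l, 0 < b l) (h : ξ j' ≤ ξ j) :
    ratAPhase a b ξ j - ratAPhase a b ξ j' ≤
      (2 * ∑ k, (a k)⁻¹ + 2 * Fintype.card ι * ∑ l, (b l)⁻¹) * (ξ j - ξ j') := by
  calc ratAPhase a b ξ j - ratAPhase a b ξ j'
      = ∑ k, (vRat (a k) (ξ j) - vRat (a k) (ξ j')) +
          ∑ m, ∑ l, (vRat (b l) (ξ j - ξ m) - vRat (b l) (ξ j' - ξ m)) := by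
        simp only [ratAPhase, sum_sub_distrib]; ring
    _ ≤ ∑ k, 2 / a k * (ξ j - ξ j') + ∑ _m : ι, ∑ l, 2 / b l * (ξ j - ξ j') := by
        gcongr with k _ m _ l
        · exact vRat_sub_le (ha k) h
        · simpa using vRat_sub_le (hb l) (sub_le_sub_right h (ξ m))
    _ = _ := by
        simp only [sum_const, card_univ, nsmul_eq_mul, ← sum_mul, div_eq_mul_inv, ← mul_sum]
        ring

end Phase

theorem le_sub_of_ratAPhase_eq {n : ℕ} {α β : Type*} [Fintype α] [Fintype β] {a : α → ℝ}
    {b : β → ℝ} (ha : ∀ k, 0 < a k) (hb : ∀ l, 0 < b l) {ξ : Fin n → ℝ}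
    (hξ : ∀ j, ratAPhase a b ξ j = π * ((n : ℝ) - 1 - 2 * j.val)) {j j' : Fin n} (hjj' : j < j') :
    2 * π * ((j'.val : ℝ) - j.val) / (2 * ∑ k, (a k)⁻¹ + 2 * n * ∑ l, (b l)⁻¹) ≤ ξ j - ξ j' := by
  have hdiff : ratAPhase a b ξ j - ratAPhase a b ξ j' = 2 * π * ((j'.val : ℝ) - j.val) := by
    rw [hξ, hξ]; ring
  have hpos : 0 < 2 * π * ((j'.val : ℝ) - j.val) := by
    have : (j.val : ℝ) < j'.val := by exact_mod_cast hjj'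
    have := pi_pos
    positivity
  have hlt : ξ j' < ξ j := by
    by_contra! hle
    have := ratAPhase_le_ratAPhase ha hb hle fun m => sub_le_sub_right hle (ξ m)
    linarith
  have hbound := ratAPhase_sub_le ha hb hlt.le
  rw [Fintype.card_fin, hdiff] at hbound
  have hκ := pos_of_mul_pos_left (hpos.trans_le hbound) (sub_pos.2 hlt).le
  rwa [div_le_iff₀ hκ, mul_comm (ξ j - ξ j')]

theorem sum_sum_mul_single_sub_single {ι : Type*} [Fintype ι] [DecidableEq ι] (g : ι → ι → ℝ)
    (hg : ∀ i m, g m i = -g i m) (j : ι) :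
    ∑ i, ∑ m, g i m * ((Pi.single j 1 : ι → ℝ) i - (Pi.single j 1 : ι → ℝ) m) = 2 * ∑ m, g j m := by
  have h1 : ∑ i, ∑ m, g i m * (Pi.single j 1 : ι → ℝ) i = ∑ m, g j m := by
    simp [Pi.single_apply]
  have h2 : ∑ i, ∑ m, g i m * (Pi.single j 1 : ι → ℝ) m = -∑ m, g j m := by
    simp [Pi.single_apply, hg _ j]
  simp only [mul_sub, sum_sub_distrib, h1, h2]
  ring

/-- The identity `∑ i, (n - 1 - 2 i) ξ i = ∑_{i < m} (ξ i - ξ m)`, symmetrised over pairs. -/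
theorem two_mul_sum_mul_le_sum_sum_abs {n : ℕ} (ξ : Fin n → ℝ) :
    2 * ∑ i : Fin n, ((n : ℝ) - 1 - 2 * i.val) * ξ i ≤ ∑ i, ∑ m, |ξ i - ξ m| := by
  set s : Fin n → Fin n → ℝ := fun i m => (if i < m then 1 else 0) - if m < i then 1 else 0
  have hs : ∀ i m, s m i = -s i m := fun i m => by simp only [s]; ring
  have hcount : ∀ i, ∑ m, s i m = (n : ℝ) - 1 - 2 * i.val := fun i => by
    have := i.isLt
    simp only [s, sum_sub_distrib, sum_boole, filter_lt_eq_Ioi, filter_gt_eq_Iio, Fin.card_Ioi,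
      Fin.card_Iio]
    rw [Nat.cast_sub (by omega), Nat.cast_sub (by omega)]
    push_cast
    ring
  have hid : 2 * ∑ i, ((n : ℝ) - 1 - 2 * i.val) * ξ i = ∑ i, ∑ m, s i m * (ξ i - ξ m) := by
    simp only [mul_sub, sum_sub_distrib, ← sum_mul, hcount]
    have hcol : ∀ m, ∑ i, s i m = -((n : ℝ) - 1 - 2 * m.val) := fun m => by
      rw [sum_congr rfl fun i _ => hs m i, sum_neg_distrib, hcount]
    rw [sum_comm]
    simp only [← sum_mul, hcol, neg_mul, sum_neg_distrib]
    ring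
  rw [hid]
  gcongr with i _ m _
  simp only [s]
  split_ifs <;> linarith [le_abs_self (ξ i - ξ m), neg_abs_le (ξ i - ξ m), abs_nonneg (ξ i - ξ m)]

/-- The paper's `V^{(r)}_{A,ρ̃}(ξ; 0, β_n)`; the pair sum is over ordered pairs, hence the `/ 2`. -/
noncomputable def ratAPotential {n : ℕ} {α β : Type*} [Fintype α] [Fintype β]
    (a : α → ℝ) (b : β → ℝ) (ξ : Fin n → ℝ) : ℝ :=
  ∑ i, ∑ k, wRat (a k) (ξ i) + (∑ i, ∑ m, ∑ l, wRat (b l) (ξ i - ξ m)) / 2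
    - π * ∑ i : Fin n, ((n : ℝ) - 1 - 2 * i.val) * ξ i

section Potential

variable {n : ℕ} {α β : Type*} [Fintype α] [Fintype β] {a : α → ℝ} {b : β → ℝ}

theorem continuous_ratAPotential : Continuous (ratAPotential a b : (Fin n → ℝ) → ℝ) := by
  unfold ratAPotential
  fun_prop

theorem hasDerivAt_ratAPotential_update (ha : ∀ k, a k ≠ 0) (hb : ∀ l, b l ≠ 0)
    (ξ : Fin n → ℝ) (j : Fin n) :
    HasDerivAt (fun t => ratAPotential a b (update ξ j t))
      (ratAPhase a b ξ j - π * ((n : ℝ) - 1 - 2 * j.val)) (ξ j) := by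
  set e : Fin n → ℝ := Pi.single j 1
  have hu : ∀ i, HasDerivAt (fun t => update ξ j t i) (e i) (ξ j) :=
    hasDerivAt_pi.1 (hasDerivAt_update ξ j (ξ j))
  have hdiag : HasDerivAt (fun t => ∑ i, ∑ k, wRat (a k) (update ξ j t i))
      (∑ i, ∑ k, vRat (a k) (ξ i) * e i) (ξ j) :=
    HasDerivAt.fun_sum fun i _ => HasDerivAt.fun_sum fun k _ =>
      (hasDerivAt_wRat (ha k) (ξ i)).comp_of_eq (ξ j) (hu i) (by simp)
  have hpair : HasDerivAt (fun t => ∑ i, ∑ m, ∑ l, wRat (b l) (update ξ j t i - update ξ j t m))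
      (∑ i, ∑ m, ∑ l, vRat (b l) (ξ i - ξ m) * (e i - e m)) (ξ j) :=
    HasDerivAt.fun_sum fun i _ => HasDerivAt.fun_sum fun m _ => HasDerivAt.fun_sum fun l _ =>
      (hasDerivAt_wRat (hb l) (ξ i - ξ m)).comp_of_eq (ξ j) ((hu i).sub (hu m)) (by simp)
  have hlin : HasDerivAt (fun t => ∑ i : Fin n, ((n : ℝ) - 1 - 2 * i.val) * update ξ j t i)
      (∑ i : Fin n, ((n : ℝ) - 1 - 2 * i.val) * e i) (ξ j) :=
    HasDerivAt.fun_sum fun i _ => (hu i).const_mul _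
  refine ((hdiag.add (hpair.div_const 2)).sub (hlin.const_mul π)).congr_deriv ?_
  have hpair' : ∑ i, ∑ m, (∑ l, vRat (b l) (ξ i - ξ m)) * (e i - e m) =
      2 * ∑ m, ∑ l, vRat (b l) (ξ j - ξ m) :=
    sum_sum_mul_single_sub_single _
      (fun i m => by simp only [← sum_neg_distrib, ← vRat_neg, neg_sub]) j
  simp only [← sum_mul, hpair']
  simp [e, Pi.single_apply, ratAPhase]

theorem exists_le_ratAPotential [Nonempty α] [Nonempty β] (ha : ∀ k, 0 < a k)
    (hb : ∀ l, 0 < b l) : ∃ C, ∀ ξ : Fin n → ℝ, π / 4 * ∑ i, |ξ i| - C ≤ ratAPotential a b ξ := by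
  obtain ⟨k₀⟩ := ‹Nonempty α›
  obtain ⟨l₀⟩ := ‹Nonempty β›
  have hπ := pi_pos
  set ε := π / (4 * (n + 1))
  have hε : 0 < ε := by positivity
  have hεn : ε * n ≤ π / 4 := by
    rw [div_mul_eq_mul_div, div_le_div_iff₀ (by positivity) (by norm_num)]
    nlinarith
  refine ⟨n * (2 * π * a k₀ / (π / 2)) + n * n * (2 * π * b l₀ / ε) / 2, fun ξ => ?_⟩
  have hdiag : ∑ i, ((π - π / 2) * |ξ i| - 2 * π * a k₀ / (π / 2)) ≤
      ∑ i, ∑ k, wRat (a k) (ξ i) :=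
    sum_le_sum fun i _ => le_sum_wRat ha k₀ (by positivity) (ξ i)
  have hpair : ∑ i, ∑ m, ((π - ε) * |ξ i - ξ m| - 2 * π * b l₀ / ε) ≤
      ∑ i, ∑ m, ∑ l, wRat (b l) (ξ i - ξ m) :=
    sum_le_sum fun i _ => sum_le_sum fun m _ => le_sum_wRat hb l₀ hε _
  have hspread : ∑ i, ∑ m, |ξ i - ξ m| ≤ 2 * n * ∑ i, |ξ i| :=
    calc ∑ i, ∑ m, |ξ i - ξ m| ≤ ∑ i : Fin n, ∑ m : Fin n, (|ξ i| + |ξ m|) := by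
          gcongr; exact abs_sub _ _
      _ = 2 * n * ∑ i, |ξ i| := by simp [sum_add_distrib, ← mul_sum]; ring
  have hsign := mul_le_mul_of_nonneg_left (two_mul_sum_mul_le_sum_sum_abs ξ) hπ.le
  have hloss := mul_le_mul_of_nonneg_left hspread hε.le
  have habsorb :=
    mul_le_mul_of_nonneg_right hεn (sum_nonneg fun i (_ : i ∈ univ) => abs_nonneg (ξ i))
  simp only [sum_sub_distrib, sum_const, card_univ, Fintype.card_fin, nsmul_eq_mul, ← mul_sum]
    at hdiag hpair
  unfold ratAPotential
  linarith

theorem exists_ratAPhase_eq [Nonempty α] [Nonempty β] (ha : ∀ k, 0 < a k) (hb : ∀ l, 0 < b l) :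
    ∃ ξ : Fin n → ℝ, ∀ j, ratAPhase a b ξ j = π * ((n : ℝ) - 1 - 2 * j.val) := by
  obtain ⟨C, hC⟩ := exists_le_ratAPotential (n := n) ha hb
  have htend : Tendsto (ratAPotential a b) (cocompact (Fin n → ℝ)) atTop := by
    refine tendsto_atTop_mono (fun ξ => ?_) (tendsto_atTop_add_const_right _ (-C)
      (tendsto_norm_cocompact_atTop.const_mul_atTop (by positivity : (0 : ℝ) < π / 4)))
    have hnorm : ‖ξ‖ ≤ ∑ i, |ξ i| := (pi_norm_le_iff_of_nonneg (by positivity)).2 fun i =>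
      (norm_eq_abs (ξ i)).trans_le (single_le_sum (fun j _ => abs_nonneg (ξ j)) (mem_univ i))
    linarith [hC ξ, mul_le_mul_of_nonneg_left hnorm (by positivity : (0 : ℝ) ≤ π / 4)]
  obtain ⟨ξ, hξ⟩ := continuous_ratAPotential.exists_forall_le htend
  refine ⟨ξ, fun j => ?_⟩
  have hmin : IsLocalMin (fun t => ratAPotential a b (update ξ j t)) (ξ j) :=
    Eventually.of_forall fun t => by simpa using hξ (update ξ j t)
  linarith [hmin.hasDerivAt_eq_zero
    (hasDerivAt_ratAPotential_update (fun k => (ha k).ne') (fun l => (hb l).ne') ξ j)]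

end Potential

theorem ratA_exists_unique_and_gap_bounds_general
    (n K L : ℕ) (hK : 1 ≤ K) (hL : 1 ≤ L)
    (a : Fin K → ℝ) (b : Fin L → ℝ)
    (ha : ∀ k, 0 < a k) (hb : ∀ l, 0 < b l)
    (κ : ℝ)
    (hκ : κ = 2 * (∑ k, (a k)⁻¹) + 2 * (n : ℝ) * (∑ l, (b l)⁻¹)) :
    (∃! ξ : Fin n → ℝ, ratASys n K L a b ξ) ∧
    (∀ ξ : Fin n → ℝ, ratASys n K L a b ξ →
      ∀ j j' : Fin n, j < j' →
        2 * π * ((j'.val : ℝ) - j.val) / κ ≤ ξ j - ξ j') := by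
  have : Nonempty (Fin K) := ⟨⟨0, hK⟩⟩
  have : Nonempty (Fin L) := ⟨⟨0, hL⟩⟩
  simp only [ratASys_iff]
  refine ⟨?_, fun ξ hξ j j' hjj' => hκ ▸ le_sub_of_ratAPhase_eq ha hb hξ hjj'⟩
  obtain ⟨ξ, hξ⟩ := exists_ratAPhase_eq (n := n) ha hb
  exact ⟨ξ, hξ, fun η hη => ratAPhase_injective ha hb (funext fun j => (hη j).trans (hξ j).symm)⟩

/-- Existence, uniqueness and gap lower bounds for the solution of the rational type A
Bethe system at `α = 0`. -/
theorem ratA_exists_unique_and_gap_bounds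
    (n K L : ℕ) (hn : 1 ≤ n) (hK : 1 ≤ K) (hL : 1 ≤ L)
    (a : Fin K → ℝ) (b : Fin L → ℝ)
    (ha : ∀ k, 0 < a k) (hb : ∀ l, 0 < b l)
    (κ : ℝ)
    (hκ : κ = 2 * (∑ k, (a k)⁻¹) + 2 * (n : ℝ) * (∑ l, (b l)⁻¹)) :
    (∃! ξ : Fin n → ℝ, ratASys n K L a b ξ) ∧
    (∀ ξ : Fin n → ℝ, ratASys n K L a b ξ →
      ∀ j j' : Fin n, j < j' →
        2 * π * ((j'.val : ℝ) - j.val) / κ ≤ ξ j - ξ j') :=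
  ratA_exists_unique_and_gap_bounds_general n K L hK hL a b ha hb κ hκ
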